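/- arXiv:1709.10450 — 2 statements merged into one kernel-verified Lean document; each statement's English description precedes it below -/
import Mathlib

section
/- Let n ≥ 1 and let f ∈ ℂ[x₁,…,xₙ] be a symmetric polynomial that is homogeneous of degree d. If f(1,1,…,1) = 0, then for every index i the partial derivative ∂f/∂xᵢ also vanishes at the point (1,1,…,1); in particular, (1,…,1) is a common zero of f and of all its partial derivatives. -/
open MvPolynomial

lemma euler_ones (n d : ℕ) (f : MvPolynomial (Fin n) ℂ) (hhom : f.IsHomogeneous d) :
    ∑ j : Fin n, MvPolynomial.eval (fun _ => (1 : ℂ)) (MvPolynomial.pderiv j f)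
      = d * MvPolynomial.eval (fun _ => (1 : ℂ)) f := by
  classical
  have step : ∀ j : Fin n, MvPolynomial.eval (fun _ => (1 : ℂ)) (MvPolynomial.pderiv j f)
      = ∑ m ∈ f.support, (MvPolynomial.coeff m f) * (m j : ℂ) := by
    intro j
    conv_lhs => rw [f.as_sum]
    rw [map_sum, map_sum]
    refine Finset.sum_congr rfl fun m hm => ?_
    simp [pderiv_monomial, eval_monomial, Finsupp.prod]
  rw [Finset.sum_congr rfl (fun j _ => step j), Finset.sum_comm]
  conv_rhs => rw [f.as_sum]
  rw [map_sum, Finset.mul_sum]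
  refine Finset.sum_congr rfl fun m hm => ?_
  have hdeg : (m.sum fun _ e => e) = d := by
    have := hhom (mem_support_iff.mp hm)
    simpa [Finsupp.weight, Finsupp.linearCombination, Finsupp.sum] using this
  rw [← Finset.mul_sum]
  have : ∑ j : Fin n, ((m j : ℂ)) = (d : ℂ) := by
    rw [← hdeg, Finsupp.sum]
    push_cast
    rw [Finset.sum_subset (Finset.subset_univ m.support)]
    intro x _ hx
    simp [Finsupp.notMem_support_iff.mp hx]
  rw [this]
  simp [eval_monomial, Finsupp.prod]
  ring

theorem stmt_1 (n d : ℕ) (hn : 1 ≤ n) (f : MvPolynomial (Fin n) ℂ)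
    (hsym : f.IsSymmetric) (hhom : f.IsHomogeneous d)
    (hvan : MvPolynomial.eval (fun _ => (1 : ℂ)) f = 0) (i : Fin n) :
    MvPolynomial.eval (fun _ => (1 : ℂ)) (MvPolynomial.pderiv i f) = 0 := by
  classical
  have heq : ∀ j : Fin n, MvPolynomial.eval (fun _ => (1 : ℂ)) (MvPolynomial.pderiv j f)
      = MvPolynomial.eval (fun _ => (1 : ℂ)) (MvPolynomial.pderiv i f) := by
    intro j
    have hswap : MvPolynomial.rename (Equiv.swap i j) f = f := hsym (Equiv.swap i j)
    have h1 : MvPolynomial.pderiv j f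
        = MvPolynomial.rename (Equiv.swap i j) (MvPolynomial.pderiv i f) := by
      conv_lhs => rw [← hswap]
      rw [← MvPolynomial.pderiv_rename (Equiv.swap i j).injective i f, Equiv.swap_apply_left]
    rw [h1, MvPolynomial.eval_rename]
    rfl
  have hsum := euler_ones n d f hhom
  rw [hvan, mul_zero] at hsum
  rw [Finset.sum_congr rfl (fun j _ => heq j), Finset.sum_const, Finset.card_univ,
    Fintype.card_fin, nsmul_eq_mul] at hsum
  have hn' : (n : ℂ) ≠ 0 := Nat.cast_ne_zero.mpr (by omega)
  exact (mul_eq_zero.mp hsum).resolve_left hn'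
end

section
/- Let n ≥ 3, and let f ∈ ℂ[x₁,…,xₙ] be a polynomial of the form f = α·p₁³ + β·p₁·p₂ + γ·p₃ with α, β, γ ∈ ℂ, where pₖ = x₁ᵏ + ⋯ + xₙᵏ. If the only common zero in ℂⁿ of all the partial derivatives ∂f/∂x₁, …, ∂f/∂xₙ is the origin, then γ ≠ 0. -/
open MvPolynomial

/-- The `k`-th power sum polynomial `x₁ᵏ + ⋯ + xₙᵏ`. -/
noncomputable def powerSum (n k : ℕ) : MvPolynomial (Fin n) ℂ :=
  ∑ i : Fin n, (MvPolynomial.X i) ^ k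

theorem stmt_7 (n : ℕ) (hn : 3 ≤ n) (α β γ : ℂ) (f : MvPolynomial (Fin n) ℂ)
    (hf : f = MvPolynomial.C α * (powerSum n 1) ^ 3
          + MvPolynomial.C β * (powerSum n 1) * (powerSum n 2)
          + MvPolynomial.C γ * (powerSum n 3))
    (hsm : ∀ x : Fin n → ℂ,
      (∀ i : Fin n, MvPolynomial.eval x (MvPolynomial.pderiv i f) = 0) → x = 0) :
    γ ≠ 0 := by
  intro hγ
  subst hγ
  -- a primitive cube root of unity
  obtain ⟨ω, hω⟩ : ∃ ω : ℂ, ω ^ 2 + ω + 1 = 0 := by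
    refine ⟨(-1 + (Real.sqrt 3 : ℂ) * Complex.I) / 2, ?_⟩
    have hs : ((Real.sqrt 3 : ℝ) : ℂ) ^ 2 = 3 := by
      norm_cast
      exact Real.sq_sqrt (by norm_num)
    linear_combination (((Real.sqrt 3 : ℝ) : ℂ) ^ 2 / 4) * Complex.I_sq - (1 / 4 : ℂ) * hs
  have h0 : (0 : ℕ) < n := by omega
  have h1 : (1 : ℕ) < n := by omega
  have h2 : (2 : ℕ) < n := by omega
  set x : Fin n → ℂ := fun i =>
    if (i : ℕ) = 0 then 1 else if (i : ℕ) = 1 then ω else if (i : ℕ) = 2 then ω ^ 2 else 0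
    with hxdef
  have hT : ∀ g : ℂ → ℂ, g 0 = 0 →
      (∑ i : Fin n, g (x i)) = g 1 + g ω + g (ω ^ 2) := by
    intro g hg
    have hsub : ({⟨0, h0⟩, ⟨1, h1⟩, ⟨2, h2⟩} : Finset (Fin n)) ⊆ Finset.univ :=
      Finset.subset_univ _
    rw [← Finset.sum_subset hsub]
    · have d01 : (⟨0, h0⟩ : Fin n) ≠ ⟨1, h1⟩ := by simp [Fin.ext_iff]
      have d02 : (⟨0, h0⟩ : Fin n) ≠ ⟨2, h2⟩ := by simp [Fin.ext_iff]
      have d12 : (⟨1, h1⟩ : Fin n) ≠ ⟨2, h2⟩ := by simp [Fin.ext_iff]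
      rw [Finset.sum_insert (by simp [d01, d02]), Finset.sum_insert (by simp [d12]),
        Finset.sum_singleton]
      simp only [hxdef]
      norm_num
      ring
    · intro i _ hi
      have : (i : ℕ) ≠ 0 ∧ (i : ℕ) ≠ 1 ∧ (i : ℕ) ≠ 2 := by
        simp only [Finset.mem_insert, Finset.mem_singleton, Fin.ext_iff] at hi
        push_neg at hi
        exact hi
      simp [hxdef, this.1, this.2.1, this.2.2, hg]
  have e1 : MvPolynomial.eval x (powerSum n 1) = 0 := by
    rw [powerSum, map_sum]
    simp only [map_pow, eval_X, pow_one]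
    have := hT (fun t => t) rfl
    rw [this]
    linear_combination hω
  have e2 : MvPolynomial.eval x (powerSum n 2) = 0 := by
    rw [powerSum, map_sum]
    simp only [map_pow, eval_X]
    rw [hT (fun t => t ^ 2) (by norm_num)]
    have hcube : ω ^ 3 = 1 := by linear_combination (ω - 1) * hω
    linear_combination hω + ω * hcube
  have hx0 : x ⟨0, h0⟩ = 1 := by simp [hxdef]
  have hxz : x = 0 := by
    apply hsm
    intro i
    rw [hf]
    have : MvPolynomial.C (0 : ℂ) * powerSum n 3 = 0 := by simp
    rw [this, add_zero]
    rw [show (powerSum n 1) ^ 3 = powerSum n 1 * (powerSum n 1 * powerSum n 1) by ring]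
    simp only [map_add, map_mul, pderiv_mul, pderiv_C, zero_mul, add_mul, mul_add,
      map_zero, zero_add, eval_C, e1, e2, mul_zero]
  exact one_ne_zero (hx0 ▸ congrFun hxz ⟨0, h0⟩)
end
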